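/- arXiv:1303.6150 — 5 statements merged into one kernel-verified Lean document; each statement's English description precedes it below -/
import Mathlib

section
/- Let E be a Banach space, f : E → E a C¹ vector field, and c : [0,b) → E (with 0 < b < ∞) a maximal integral curve of f (i.e., c'(t) = f(c(t)) for all t). If there exists a sequence tₙ → b⁻ such that c(tₙ) converges in E, then c extends to an integral curve of f on an interval strictly containing [0,b). -/
/-!
Near the limit point `L` the `C¹` field `f` has a local flow whose existence time `ε` is uniform
for initial values in a ball around `L`. Choose `n` with `c (t n)` in that ball and
`b - t n < ε`: the solution started at `c (t n)` at time `t n` lives beyond `b`, agrees with `c`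
by uniqueness for locally Lipschitz fields, and so continues `c` past `b`.
-/

open Set Filter Topology

section

variable {E : Type*} [NormedAddCommGroup E] [NormedSpace ℝ E] {f : E → E}

namespace LocallyLipschitz

theorem eventuallyEq_of_hasDerivAt (hf : LocallyLipschitz f) {γ γ' : ℝ → E} {t₀ : ℝ}
    (hγ : ∀ᶠ t in 𝓝 t₀, HasDerivAt γ (f (γ t)) t)
    (hγ' : ∀ᶠ t in 𝓝 t₀, HasDerivAt γ' (f (γ' t)) t) (h : γ t₀ = γ' t₀) :
    γ =ᶠ[𝓝 t₀] γ' := by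
  obtain ⟨K, U, hU, hK⟩ := hf (γ t₀)
  have hγU : ∀ᶠ t in 𝓝 t₀, γ t ∈ U := hγ.self_of_nhds.continuousAt.eventually_mem hU
  have hγ'U : ∀ᶠ t in 𝓝 t₀, γ' t ∈ U :=
    hγ'.self_of_nhds.continuousAt.eventually_mem (h ▸ hU)
  exact ODE_solution_unique_of_eventually (v := fun _ ↦ f) (s := fun _ ↦ U)
    (.of_forall fun _ ↦ hK) (hγ.and hγU) (hγ'.and hγ'U) h

/-- The set where two integral curves agree is open by local uniqueness and closed by
continuity, hence everything on a preconnected domain. -/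
theorem eqOn_of_hasDerivAt (hf : LocallyLipschitz f) {γ γ' : ℝ → E} {s : Set ℝ} {t₀ : ℝ}
    (hs : IsOpen s) (hs' : IsPreconnected s) (ht₀ : t₀ ∈ s)
    (hγ : ∀ t ∈ s, HasDerivAt γ (f (γ t)) t) (hγ' : ∀ t ∈ s, HasDerivAt γ' (f (γ' t)) t)
    (h : γ t₀ = γ' t₀) : EqOn γ γ' s := by
  intro t ht
  refine (hs'.induction₂ (fun x y ↦ γ x = γ' x ↔ γ y = γ' y) (fun x hx ↦ ?_)
    (fun _ _ _ _ _ _ ↦ Iff.trans) (fun _ _ _ _ ↦ Iff.symm) ht₀ ht).1 h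
  refine nhdsWithin_le_nhds ?_
  by_cases hx' : γ x = γ' x
  · filter_upwards [hf.eventuallyEq_of_hasDerivAt (eventually_of_mem (hs.mem_nhds hx) hγ)
      (eventually_of_mem (hs.mem_nhds hx) hγ') hx'] with y hy
    simp [hx', hy]
  · have hsub := (hγ x hx).continuousAt.sub (hγ' x hx).continuousAt
    filter_upwards [hsub.eventually_ne (sub_ne_zero.2 hx')] with y hy
    simp [hx', sub_ne_zero.1 hy]

end LocallyLipschitz

theorem hasDerivAt_ite_of_eqOn {c β : ℝ → E} {t₀ a b b' : ℝ} (hab : a < b)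
    (hc : ∀ t ∈ Ico t₀ b, HasDerivAt c (f (c t)) t)
    (hβ : ∀ t ∈ Ioo a b', HasDerivAt β (f (β t)) t) (heq : EqOn c β (Ioo a b)) :
    ∀ t ∈ Ico t₀ b', HasDerivAt (fun s ↦ if s < b then c s else β s)
      (f (if t < b then c t else β t)) t := by
  intro t ht
  rcases lt_or_ge t b with htb | hbt
  · have hev : (fun s ↦ if s < b then c s else β s) =ᶠ[𝓝 t] c := by
      filter_upwards [Iio_mem_nhds htb] with s hs
      exact if_pos hs
    rw [hev.eq_of_nhds]
    exact (hc t ⟨ht.1, htb⟩).congr_of_eventuallyEq hev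
  · have htβ : t ∈ Ioo a b' := ⟨hab.trans_le hbt, ht.2⟩
    have hev : (fun s ↦ if s < b then c s else β s) =ᶠ[𝓝 t] β := by
      filter_upwards [Ioo_mem_nhds htβ.1 htβ.2] with s hs
      split_ifs with hsb
      exacts [heq ⟨hs.1, hsb⟩, rfl]
    rw [hev.eq_of_nhds]
    exact (hβ t htβ).congr_of_eventuallyEq hev

end

/-- If a maximal integral curve `c : [0,b) → E` of a `C¹` vector field `f` on a Banach space
has a sequence `tₙ → b⁻` with `c tₙ` convergent, then `c` extends as an integral curve
beyond `b`. -/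
theorem stmt_0 {E : Type*} [NormedAddCommGroup E] [NormedSpace ℝ E] [CompleteSpace E]
    (f : E → E) (hf : ContDiff ℝ 1 f) (b : ℝ) (hb : 0 < b)
    (c : ℝ → E) (hc : ∀ t ∈ Set.Ico (0:ℝ) b, HasDerivAt c (f (c t)) t)
    (t : ℕ → ℝ) (ht : ∀ n, t n ∈ Set.Ico (0:ℝ) b)
    (htb : Filter.Tendsto t Filter.atTop (nhds b))
    (L : E) (hL : Filter.Tendsto (fun n => c (t n)) Filter.atTop (nhds L)) :
    ∃ b' > b, ∃ c' : ℝ → E,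
      (∀ s ∈ Set.Ico (0:ℝ) b, c' s = c s) ∧
      ∀ s ∈ Set.Ico (0:ℝ) b', HasDerivAt c' (f (c' s)) s := by
  obtain ⟨r, hr, ε, hε, hflow⟩ :=
    hf.contDiffAt.exists_forall_mem_closedBall_exists_eq_forall_mem_Ioo_hasDerivAt (x₀ := L) 0
  obtain ⟨n, htn₀, htnε, hcn⟩ : ∃ n, 0 < t n ∧ b - ε < t n ∧ c (t n) ∈ Metric.closedBall L r :=
    ((htb.eventually (eventually_gt_nhds hb)).and <|
      (htb.eventually (eventually_gt_nhds (by linarith))).and <|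
      hL.eventually (Metric.closedBall_mem_nhds L hr)).exists
  obtain ⟨α, hα₀, hα⟩ := hflow (c (t n)) hcn
  have hβ : ∀ s ∈ Ioo (t n - ε) (t n + ε),
      HasDerivAt (fun s ↦ α (s - t n)) (f (α (s - t n))) s :=
    fun s hs ↦ (hα (s - t n) ⟨by linarith [hs.1], by linarith [hs.2]⟩).comp_sub_const s (t n)
  have hab : max 0 (t n - ε) < b := max_lt hb (by linarith [(ht n).2])
  have heq : EqOn c (fun s ↦ α (s - t n)) (Ioo (max 0 (t n - ε)) b) :=
    hf.locallyLipschitz.eqOn_of_hasDerivAt isOpen_Ioo isPreconnected_Ioo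
      ⟨max_lt htn₀ (by linarith), (ht n).2⟩
      (fun s hs ↦ hc s ⟨(le_max_left _ _).trans hs.1.le, hs.2⟩)
      (fun s hs ↦ hβ s ⟨(le_max_right _ _).trans_lt hs.1, by linarith [hs.2]⟩)
      (by simp [hα₀])
  exact ⟨t n + ε, by linarith, _, fun s hs ↦ if_pos hs.2,
    hasDerivAt_ite_of_eqOn hab hc
      (fun s hs ↦ hβ s ⟨(le_max_right _ _).trans_lt hs.1, hs.2⟩) heq⟩
end

section
/- Let E be a Banach space and X : E → E a C¹ vector field satisfying a linear growth bound ‖X(p)‖ ≤ C₀ + C₁‖p‖ for all p ∈ E, with constants C₀, C₁ > 0. Then every maximal integral curve of X is defined on all of ℝ, i.e., X is a complete vector field. -/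
/-!
Grönwall's inequality turns the growth bound `‖X p‖ ≤ C₀ + C₁ ‖p‖` into a bound on `‖f‖`, hence on
`‖f'‖ = ‖X ∘ f‖`, for an integral curve `f` over any bounded time interval. Such a curve is
therefore uniformly continuous, has a limit at each finite end of its interval, and can be continued
past it by Picard–Lindelöf. By uniqueness, the integral curves through `(t₀, x₀)` defined on balls
around `t₀` glue to one on the union of these balls; were their radii bounded, it could be continued
beyond the supremum.
-/

open Set Filter Topology Metric

section IntegralCurve

variable {E : Type*} [NormedAddCommGroup E] [NormedSpace ℝ E] {X : E → E} {f g : ℝ → E}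
  {a b t₀ : ℝ}

theorem IsIntegralCurveAt.eventuallyEq_of_contDiffAt (hX : ContDiffAt ℝ 1 X (f t₀))
    (hf : IsIntegralCurveAt f (fun _ ↦ X) t₀) (hg : IsIntegralCurveAt g (fun _ ↦ X) t₀)
    (h : f t₀ = g t₀) : f =ᶠ[𝓝 t₀] g := by
  obtain ⟨K, U, hU, hlip⟩ := hX.exists_lipschitzOnWith
  have hfU : ∀ᶠ t in 𝓝 t₀, f t ∈ U := hf.continuousAt.eventually_mem hU
  have hgU : ∀ᶠ t in 𝓝 t₀, g t ∈ U := hg.continuousAt.eventually_mem (h ▸ hU)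
  exact ODE_solution_unique_of_eventually (s := fun _ ↦ U) (.of_forall fun _ ↦ hlip)
    (Eventually.and hf hfU) (Eventually.and hg hgU) h

theorem IsIntegralCurveOn.eqOn_of_contDiff (hX : ContDiff ℝ 1 X) {s : Set ℝ} (hso : IsOpen s)
    (hsc : IsPreconnected s) (hf : IsIntegralCurveOn f (fun _ ↦ X) s)
    (hg : IsIntegralCurveOn g (fun _ ↦ X) s) (ht₀ : t₀ ∈ s) (h : f t₀ = g t₀) : EqOn f g s := by
  have hloc : ∀ t ∈ s, f t = g t → f =ᶠ[𝓝 t] g := fun t ht ↦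
    (hf.isIntegralCurveAt (hso.mem_nhds ht)).eventuallyEq_of_contDiffAt hX.contDiffAt
      (hg.isIntegralCurveAt (hso.mem_nhds ht))
  -- `s` splits into the open sets where `f` and `g` agree locally and where they differ
  have hsub : s ⊆ {t | f =ᶠ[𝓝 t] g} := by
    refine hsc.subset_left_of_subset_union isOpen_setOfPred_eventually_nhds
      ((hf.continuousOn.prodMk hg.continuousOn).isOpen_inter_preimage hso
        isClosed_diagonal.isOpen_compl) ?_ ?_ ⟨t₀, ht₀, hloc t₀ ht₀ h⟩
    · exact disjoint_left.2 fun t hfg hne ↦ hne.2 hfg.self_of_nhds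
    · intro t ht
      by_cases hft : f t = g t
      exacts [Or.inl (hloc t ht hft), Or.inr ⟨ht, hft⟩]
  exact fun t ht ↦ (hsub ht).self_of_nhds

theorem exists_isIntegralCurveOn_iUnion (hX : ContDiff ℝ 1 X) {ι : Type*} {J : ι → Set ℝ}
    (hJo : ∀ i, IsOpen (J i)) (hJc : ∀ i, (J i).OrdConnected) (ht₀ : ∀ i, t₀ ∈ J i)
    {F : ι → ℝ → E} (hF : ∀ i, IsIntegralCurveOn (F i) (fun _ ↦ X) (J i))
    (hF₀ : ∀ i j, F i t₀ = F j t₀) :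
    ∃ g : ℝ → E, (∀ i, EqOn g (F i) (J i)) ∧ IsIntegralCurveOn g (fun _ ↦ X) (⋃ i, J i) := by
  classical
  let g t := if h : ∃ i, t ∈ J i then F h.choose t else 0
  have hgF : ∀ i, EqOn g (F i) (J i) := by
    intro i t ht
    have h : ∃ i, t ∈ J i := ⟨i, ht⟩
    simp only [g, dif_pos h]
    exact ((hF h.choose).mono inter_subset_left).eqOn_of_contDiff hX
      ((hJo _).inter (hJo i)) ((hJc _).inter (hJc i)).isPreconnected
      ((hF i).mono inter_subset_right) ⟨ht₀ _, ht₀ i⟩ (hF₀ _ i) ⟨h.choose_spec, ht⟩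
  refine ⟨g, hgF, fun t ht ↦ ?_⟩
  obtain ⟨i, hi⟩ := mem_iUnion.1 ht
  have hgF_nhds : g =ᶠ[𝓝 t] F i := eventuallyEq_of_mem ((hJo i).mem_nhds hi) (hgF i)
  rw [hgF i hi]
  exact (hgF_nhds.hasDerivAt_iff.2
    (((hF i).isIntegralCurveAt ((hJo i).mem_nhds hi)).hasDerivAt)).hasDerivWithinAt

theorem IsIntegralCurveOn.comp_neg (hf : IsIntegralCurveOn f (fun _ ↦ X) (Ioo a b)) :
    IsIntegralCurveOn (fun t ↦ f (-t)) (fun _ x ↦ -X x) (Ioo (-b) (-a)) := by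
  intro t ht
  have hneg : -t ∈ Ioo a b := ⟨lt_neg.2 ht.2, neg_lt.2 ht.1⟩
  have := ((hf.isIntegralCurveAt (Ioo_mem_nhds hneg.1 hneg.2)).hasDerivAt).scomp t
    (hasDerivAt_neg t)
  simpa [Function.comp_def] using this.hasDerivWithinAt

theorem exists_tendsto_nhdsLT_of_norm_deriv_le [CompleteSpace E] {f' : ℝ → E} {C : ℝ}
    (hab : a < b) (hf : ∀ t ∈ Ico a b, HasDerivWithinAt f (f' t) (Ico a b) t)
    (hC : ∀ t ∈ Ico a b, ‖f' t‖ ≤ C) : ∃ y, Tendsto f (𝓝[<] b) (𝓝 y) := by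
  have hbound : ∀ t ∈ Ico a b, ‖f' t‖₊ ≤ C.toNNReal := fun t ht ↦ by
    rw [← NNReal.coe_le_coe, coe_nnnorm, Real.coe_toNNReal']
    exact (hC t ht).trans (le_max_left _ _)
  have hu : UniformContinuousOn f (Ico a b) :=
    ((convex_Ico a b).lipschitzOnWith_of_nnnorm_hasDerivWithin_le hf hbound).uniformContinuousOn
  exact cauchy_map_iff_exists_tendsto.1 <|
    (cauchy_nhds.mono nhdsWithin_le_nhds).map_of_le hu (le_principal_iff.2 (Ico_mem_nhdsLT hab))

theorem IsIntegralCurveOn.exists_extension_right_of_tendsto [CompleteSpace E] {y : E}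
    (hX : ContDiffAt ℝ 1 X y) (hab : a < b) (hf : IsIntegralCurveOn f (fun _ ↦ X) (Ioo a b))
    (hy : Tendsto f (𝓝[<] b) (𝓝 y)) :
    ∃ ε > 0, ∃ g : ℝ → E, EqOn g f (Ioo a b) ∧
      IsIntegralCurveOn g (fun _ ↦ X) (Ioo a (b + ε)) := by
  obtain ⟨h, hhb, ε, hε, hh⟩ :=
    hX.exists_forall_mem_closedBall_exists_eq_forall_mem_Ioo_hasDerivAt₀ b
  set g : ℝ → E := fun t ↦ if t < b then f t else h t
  have hgf : EqOn g f (Iio b) := fun t ht ↦ if_pos ht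
  have hgh : EqOn g h (Ici b) := fun t ht ↦ if_neg (not_lt.2 ht)
  have hf' : ∀ t ∈ Ioo a b, HasDerivAt g (X (g t)) t := fun t ht ↦ by
    rw [hgf ht.2]
    exact (eventuallyEq_of_mem (Iio_mem_nhds ht.2) hgf).hasDerivAt_iff.2
      ((hf.isIntegralCurveAt (Ioo_mem_nhds ht.1 ht.2)).hasDerivAt)
  refine ⟨ε, hε, g, fun t ht ↦ hgf ht.2, fun t ht ↦ HasDerivAt.hasDerivWithinAt ?_⟩
  rcases lt_trichotomy t b with htb | rfl | htb
  · exact hf' t ⟨ht.1, htb⟩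
  · -- at the junction, `X (f s) → X y` gives the left derivative and `h` the right one
    have hleft : HasDerivWithinAt g (X y) (Iic t) t := by
      refine hasDerivWithinAt_Iic_of_tendsto_deriv (s := Ioo a t)
        (fun s hs ↦ (hf' s hs).differentiableAt.differentiableWithinAt) ?_
        (Ioo_mem_nhdsLT hab) ?_
      · rw [ContinuousWithinAt, hgh self_mem_Ici, hhb]
        exact (hy.mono_left (nhdsWithin_mono _ Ioo_subset_Iio_self)).congr'
          (eventuallyEq_nhdsWithin_of_eqOn fun s hs ↦ (hgf hs.2).symm)
      · refine (hX.continuousAt.tendsto.comp hy).congr' ?_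
        filter_upwards [Ioo_mem_nhdsLT hab] with s hs
        rw [(hf' s hs).deriv, hgf hs.2, Function.comp_apply]
    have hright : HasDerivWithinAt g (X y) (Ici t) t := by
      have := hh t ⟨by linarith, by linarith⟩
      rw [hhb] at this
      exact this.hasDerivWithinAt.congr (fun s hs ↦ hgh hs) (hgh self_mem_Ici)
    rw [hgh self_mem_Ici, hhb]
    simpa [Iic_union_Ici] using hleft.union hright
  · rw [hgh htb.le]
    have hgh_nhds : g =ᶠ[𝓝 t] h := eventuallyEq_of_mem (Ioi_mem_nhds htb) fun s hs ↦
      hgh (mem_Ici.2 (le_of_lt hs))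
    exact hgh_nhds.hasDerivAt_iff.2 (hh t ⟨by linarith, ht.2⟩)

section LinearGrowth

variable {C₀ C₁ : ℝ} (hgrowth : ∀ p, ‖X p‖ ≤ C₀ + C₁ * ‖p‖)
include hgrowth

theorem IsIntegralCurveOn.norm_le_gronwallBound (hf : IsIntegralCurveOn f (fun _ ↦ X) (Ioo a b))
    {m t : ℝ} (hm : a < m) (ht : t ∈ Ico m b) : ‖f t‖ ≤ gronwallBound ‖f m‖ C₁ C₀ (t - m) := by
  have hderiv : ∀ u ∈ Icc m t, HasDerivAt f (X (f u)) u := fun u hu ↦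
    (hf.isIntegralCurveAt (Ioo_mem_nhds (hm.trans_le hu.1) (hu.2.trans_lt ht.2))).hasDerivAt
  refine norm_le_gronwallBound_of_norm_deriv_right_le
    (fun u hu ↦ (hderiv u hu).continuousAt.continuousWithinAt)
    (fun u hu ↦ (hderiv u (Ico_subset_Icc_self hu)).hasDerivWithinAt) le_rfl
    (fun u _ ↦ ?_) t ⟨ht.1, le_rfl⟩
  linarith [hgrowth (f u)]

variable [CompleteSpace E]

theorem IsIntegralCurveOn.exists_tendsto_nhdsLT (hC₀ : 0 ≤ C₀) (hC₁ : 0 ≤ C₁)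
    (hab : a < b) (hf : IsIntegralCurveOn f (fun _ ↦ X) (Ioo a b)) :
    ∃ y, Tendsto f (𝓝[<] b) (𝓝 y) := by
  obtain ⟨m, ham, hmb⟩ := exists_between hab
  set B := gronwallBound ‖f m‖ C₁ C₀ (b - m)
  have hB : ∀ t ∈ Ico m b, ‖f t‖ ≤ B := fun t ht ↦
    (hf.norm_le_gronwallBound hgrowth ham ht).trans
      (gronwallBound_mono (norm_nonneg _) hC₀ hC₁ (by linarith [ht.2]))
  refine exists_tendsto_nhdsLT_of_norm_deriv_le (f' := fun t ↦ X (f t)) (C := C₀ + C₁ * B) hmb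
    (fun t ht ↦ ?_) (fun t ht ↦ ?_)
  · exact (hf.isIntegralCurveAt (Ioo_mem_nhds (ham.trans_le ht.1) ht.2)).hasDerivAt
      |>.hasDerivWithinAt
  · nlinarith [hgrowth (f t), hB t ht]

theorem IsIntegralCurveOn.exists_extension_right (hX : ContDiff ℝ 1 X) (hC₀ : 0 ≤ C₀)
    (hC₁ : 0 ≤ C₁) (hab : a < b) (hf : IsIntegralCurveOn f (fun _ ↦ X) (Ioo a b)) :
    ∃ ε > 0, ∃ g : ℝ → E, EqOn g f (Ioo a b) ∧
      IsIntegralCurveOn g (fun _ ↦ X) (Ioo a (b + ε)) :=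
  have ⟨_, hy⟩ := hf.exists_tendsto_nhdsLT hgrowth hC₀ hC₁ hab
  hf.exists_extension_right_of_tendsto hX.contDiffAt hab hy

theorem IsIntegralCurveOn.exists_extension_left (hX : ContDiff ℝ 1 X) (hC₀ : 0 ≤ C₀)
    (hC₁ : 0 ≤ C₁) (hab : a < b) (hf : IsIntegralCurveOn f (fun _ ↦ X) (Ioo a b)) :
    ∃ ε > 0, ∃ g : ℝ → E, EqOn g f (Ioo a b) ∧
      IsIntegralCurveOn g (fun _ ↦ X) (Ioo (a - ε) b) := by
  obtain ⟨ε, hε, g, hgf, hg⟩ := hf.comp_neg.exists_extension_right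
    (fun p ↦ by simpa using hgrowth p) hX.neg hC₀ hC₁ (neg_lt_neg hab)
  refine ⟨ε, hε, fun t ↦ g (-t), fun t ht ↦ ?_, ?_⟩
  · simpa using hgf ⟨neg_lt_neg ht.2, neg_lt_neg ht.1⟩
  · simpa [neg_add_eq_sub] using hg.comp_neg

theorem IsIntegralCurveOn.exists_extension (hX : ContDiff ℝ 1 X) (hC₀ : 0 ≤ C₀)
    (hC₁ : 0 ≤ C₁) (hab : a < b) (hf : IsIntegralCurveOn f (fun _ ↦ X) (Ioo a b)) :
    ∃ ε > 0, ∃ g : ℝ → E, EqOn g f (Ioo a b) ∧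
      IsIntegralCurveOn g (fun _ ↦ X) (Ioo (a - ε) (b + ε)) := by
  obtain ⟨ε₁, hε₁, g₁, hg₁f, hg₁⟩ := hf.exists_extension_right hgrowth hX hC₀ hC₁ hab
  obtain ⟨ε₂, hε₂, g₂, hg₂g₁, hg₂⟩ :=
    hg₁.exists_extension_left hgrowth hX hC₀ hC₁ (by linarith)
  refine ⟨min ε₁ ε₂, lt_min hε₁ hε₂, g₂, fun t ht ↦ ?_, hg₂.mono (Ioo_subset_Ioo ?_ ?_)⟩
  · rw [hg₂g₁ ⟨ht.1, by linarith [ht.2]⟩, hg₁f ht]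
  · linarith [min_le_right ε₁ ε₂]
  · linarith [min_le_left ε₁ ε₂]

theorem exists_isIntegralCurve_of_linear_growth (hX : ContDiff ℝ 1 X) (hC₀ : 0 ≤ C₀)
    (hC₁ : 0 ≤ C₁) (t₀ : ℝ) (x₀ : E) :
    ∃ γ : ℝ → E, γ t₀ = x₀ ∧ IsIntegralCurve γ (fun _ ↦ X) := by
  set A := {T : ℝ | 0 < T ∧
    ∃ γ : ℝ → E, γ t₀ = x₀ ∧ IsIntegralCurveOn γ (fun _ ↦ X) (ball t₀ T)}
  choose F hF₀ hF using fun T : A ↦ T.2.2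
  obtain ⟨g, hgF, hg⟩ := exists_isIntegralCurveOn_iUnion hX (J := fun T : A ↦ ball t₀ T)
    (fun _ ↦ isOpen_ball) (fun _ ↦ Real.ball_eq_Ioo _ _ ▸ ordConnected_Ioo)
    (fun T ↦ mem_ball_self T.2.1) hF (fun i j ↦ (hF₀ i).trans (hF₀ j).symm)
  obtain ⟨ε, hε⟩ : A.Nonempty := by
    obtain ⟨γ, hγ₀, ε, hε, hγ⟩ :=
      hX.contDiffAt.exists_forall_mem_closedBall_exists_eq_forall_mem_Ioo_hasDerivAt₀ t₀
    exact ⟨ε, hε, γ, hγ₀, fun t ht ↦ (hγ t (Real.ball_eq_Ioo t₀ ε ▸ ht)).hasDerivWithinAt⟩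
  have hg₀ : g t₀ = x₀ := (hgF ⟨ε, hε⟩ (mem_ball_self hε.1)).trans (hF₀ _)
  have hA : ¬BddAbove A := by
    intro hbdd
    have hεS : ε ≤ sSup A := le_csSup hbdd hε
    have hgS : IsIntegralCurveOn g (fun _ ↦ X) (Ioo (t₀ - sSup A) (t₀ + sSup A)) := by
      refine hg.mono fun t ht ↦ ?_
      obtain ⟨T, hTA, hT⟩ := exists_lt_of_lt_csSup ⟨ε, hε⟩ (Real.ball_eq_Ioo t₀ _ ▸ ht :)
      exact mem_iUnion.2 ⟨⟨T, hTA⟩, hT⟩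
    obtain ⟨δ, hδ, γ, hγg, hγ⟩ := hgS.exists_extension hgrowth hX hC₀ hC₁ (by linarith [hε.1])
    have hSδ : sSup A + δ ∈ A := by
      have ht₀ : t₀ ∈ Ioo (t₀ - sSup A) (t₀ + sSup A) := ⟨by linarith [hε.1], by linarith [hε.1]⟩
      refine ⟨by linarith [hε.1], γ, (hγg ht₀).trans hg₀, ?_⟩
      rw [Real.ball_eq_Ioo, ← sub_sub, ← add_assoc]
      exact hγ
    linarith [le_csSup hbdd hSδ]
  refine ⟨g, hg₀, isIntegralCurveOn_univ.1 (hg.mono fun t _ ↦ ?_)⟩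
  obtain ⟨T, hTA, hT⟩ := not_bddAbove_iff.1 hA (dist t t₀)
  exact mem_iUnion.2 ⟨⟨T, hTA⟩, hT⟩

end LinearGrowth

end IntegralCurve

/-- A `C¹` vector field on a Banach space with at most linear growth is complete: every integral
curve defined on an open interval extends to an integral curve defined on all of `ℝ`. -/
theorem stmt_4 {E : Type*} [NormedAddCommGroup E] [NormedSpace ℝ E] [CompleteSpace E]
    (X : E → E) (hX : ContDiff ℝ 1 X)
    (C₀ C₁ : ℝ) (hC₀ : 0 < C₀) (hC₁ : 0 < C₁)
    (hgrowth : ∀ p : E, ‖X p‖ ≤ C₀ + C₁ * ‖p‖)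
    (a b : ℝ) (c : ℝ → E)
    (hc : ∀ t ∈ Set.Ioo a b, HasDerivAt c (X (c t)) t) :
    ∃ c' : ℝ → E, (∀ t ∈ Set.Ioo a b, c' t = c t) ∧ ∀ t : ℝ, HasDerivAt c' (X (c' t)) t := by
  obtain ⟨γ, hγ₀, hγ⟩ := exists_isIntegralCurve_of_linear_growth hgrowth hX hC₀.le hC₁.le
    ((a + b) / 2) (c ((a + b) / 2))
  refine ⟨γ, fun t ht ↦ ?_, hγ⟩
  have hmid : (a + b) / 2 ∈ Ioo a b := ⟨by linarith [ht.1, ht.2], by linarith [ht.1, ht.2]⟩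
  exact (hγ.isIntegralCurveOn _).eqOn_of_contDiff hX isOpen_Ioo isPreconnected_Ioo
    (fun s hs ↦ (hc s hs).hasDerivWithinAt) hmid hγ₀ ht
end

section
/- Let E be a Banach space and X : E × ℝ → E a time-dependent C¹ vector field. Suppose there exist continuous functions C₀, C₁ : ℝ → (0,∞) such that ‖X(p,t)‖ ≤ C₀(t) + C₁(t)‖p‖ for all (p,t). Then every maximal solution of c'(t) = X(c(t), t) is defined on all of ℝ. -/
/-!
Local existence (Picard–Lindelöf) and local uniqueness are applied to the autonomous field
`(x, s) ↦ (X x s, 1)` on `E × ℝ`, of which `t ↦ (γ t, t)` is an integral curve whenever `γ` solves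
`γ' t = X (γ t) t`. The times reached by solutions through `(t₀, x₀)` defined on open intervals
form an open interval `J`, on which these solutions glue to a single one. `J` is also closed: on a
bounded subinterval, the growth bound and Grönwall's inequality bound the solution, hence its
derivative, so the solution is Lipschitz and, `E` being complete, has a limit at each endpoint;
the local solution starting near that limit continues it past the endpoint. Hence `J = ℝ`.
-/

open Set Filter Topology Metric

theorem exists_forall_norm_le_mul_one_add {F G : Type*} [NormedAddCommGroup F]
    [NormedAddCommGroup G] {X : F → ℝ → G} {C₀ C₁ : ℝ → ℝ} {a b : ℝ}
    (hC₀ : ContinuousOn C₀ (Icc a b)) (hC₁ : ContinuousOn C₁ (Icc a b))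
    (hgrowth : ∀ p, ∀ t ∈ Icc a b, ‖X p t‖ ≤ C₀ t + C₁ t * ‖p‖) :
    ∃ D, 0 ≤ D ∧ ∀ p, ∀ t ∈ Icc a b, ‖X p t‖ ≤ D * (1 + ‖p‖) := by
  obtain ⟨D₀, hD₀⟩ := isCompact_Icc.exists_bound_of_continuousOn hC₀
  obtain ⟨D₁, hD₁⟩ := isCompact_Icc.exists_bound_of_continuousOn hC₁
  refine ⟨|D₀| + |D₁|, by positivity, fun p t ht => ?_⟩
  have h₀ : C₀ t ≤ |D₀| := (le_abs_self _).trans ((hD₀ t ht).trans (le_abs_self _))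
  have h₁ : C₁ t * ‖p‖ ≤ |D₁| * ‖p‖ :=
    mul_le_mul_of_nonneg_right ((le_abs_self _).trans ((hD₁ t ht).trans (le_abs_self _)))
      (norm_nonneg p)
  nlinarith [hgrowth p t ht, norm_nonneg p, abs_nonneg D₀, abs_nonneg D₁]

section

variable {E : Type*} [NormedAddCommGroup E] [NormedSpace ℝ E]

theorem eventuallyEq_of_hasDerivAt {X : E → ℝ → E} {γ₁ γ₂ : ℝ → E} {t₀ : ℝ}
    (hX : ContDiffAt ℝ 1 (fun q : E × ℝ => X q.1 q.2) (γ₁ t₀, t₀))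
    (h₁ : ∀ᶠ t in 𝓝 t₀, HasDerivAt γ₁ (X (γ₁ t) t) t)
    (h₂ : ∀ᶠ t in 𝓝 t₀, HasDerivAt γ₂ (X (γ₂ t) t) t) (heq : γ₁ t₀ = γ₂ t₀) :
    γ₁ =ᶠ[𝓝 t₀] γ₂ := by
  obtain ⟨K, U, hU, hlip⟩ := (hX.prodMk (contDiffAt_const (c := (1 : ℝ)))).exists_lipschitzOnWith
  have lift : ∀ γ : ℝ → E, γ t₀ = γ₁ t₀ → (∀ᶠ t in 𝓝 t₀, HasDerivAt γ (X (γ t) t) t) →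
      ∀ᶠ t in 𝓝 t₀, HasDerivAt (fun s => (γ s, s)) (X (γ t) t, (1 : ℝ)) t ∧ (γ t, t) ∈ U := by
    intro γ hγ₀ hγ
    have hcont : ContinuousAt (fun s => (γ s, s)) t₀ :=
      hγ.self_of_nhds.continuousAt.prodMk continuousAt_id
    filter_upwards [hγ, hcont.preimage_mem_nhds (by rwa [hγ₀])] with t ht htU
    exact ⟨ht.prodMk (hasDerivAt_id t), htU⟩
  have hlift := ODE_solution_unique_of_eventually (s := fun _ => U)
    (v := fun _ q => (X q.1 q.2, (1 : ℝ))) (Eventually.of_forall fun _ => hlip)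
    (lift γ₁ rfl h₁) (lift γ₂ heq.symm h₂) (by rw [heq])
  exact hlift.fun_comp Prod.fst

theorem eqOn_of_hasDerivAt {X : E → ℝ → E} (hX : ContDiff ℝ 1 (fun q : E × ℝ => X q.1 q.2))
    {s : Set ℝ} (hs : IsOpen s) (hs' : IsPreconnected s) {γ₁ γ₂ : ℝ → E}
    (h₁ : ∀ t ∈ s, HasDerivAt γ₁ (X (γ₁ t) t) t) (h₂ : ∀ t ∈ s, HasDerivAt γ₂ (X (γ₂ t) t) t)
    {t₀ : ℝ} (ht₀ : t₀ ∈ s) (heq : γ₁ t₀ = γ₂ t₀) : EqOn γ₁ γ₂ s := by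
  have hloc : ∀ t ∈ s, γ₁ t = γ₂ t → γ₁ =ᶠ[𝓝 t] γ₂ := fun t ht =>
    eventuallyEq_of_hasDerivAt hX.contDiffAt (eventually_of_mem (hs.mem_nhds ht) h₁)
      (eventually_of_mem (hs.mem_nhds ht) h₂)
  have hsub : s ⊆ {t | γ₁ =ᶠ[𝓝 t] γ₂} := by
    refine hs'.subset_of_closure_inter_subset isOpen_setOfPred_eventually_nhds
      ⟨t₀, ht₀, hloc t₀ ht₀ heq⟩ fun t ⟨htu, hts⟩ => hloc t hts ?_
    have : (𝓝[{t | γ₁ =ᶠ[𝓝 t] γ₂}] t).NeBot := mem_closure_iff_nhdsWithin_neBot.1 htu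
    exact tendsto_nhds_unique_of_eventuallyEq (l := 𝓝[{t | γ₁ =ᶠ[𝓝 t] γ₂}] t)
      ((h₁ t hts).continuousAt.mono_left nhdsWithin_le_nhds)
      ((h₂ t hts).continuousAt.mono_left nhdsWithin_le_nhds)
      (eventually_nhdsWithin_of_forall fun _ (h : γ₁ =ᶠ[𝓝 _] γ₂) => h.self_of_nhds)
  exact fun t ht => (hsub ht).self_of_nhds

theorem hasDerivAt_ode_congr {X : E → ℝ → E} {f g : ℝ → E} {s : Set ℝ} (hs : IsOpen s)
    (hfg : EqOn f g s) (hg : ∀ t ∈ s, HasDerivAt g (X (g t) t) t) :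
    ∀ t ∈ s, HasDerivAt f (X (f t) t) t := fun t ht => by
  rw [hfg ht]
  exact (hg t ht).congr_of_eventuallyEq (eventually_of_mem (hs.mem_nhds ht) hfg)

theorem exists_forall_dist_le_exists_hasDerivAt [CompleteSpace E] {X : E → ℝ → E} {y : E} {T : ℝ}
    (hX : ContDiffAt ℝ 1 (fun q : E × ℝ => X q.1 q.2) (y, T)) :
    ∃ r > (0 : ℝ), ∃ ε > (0 : ℝ), ∀ x τ, dist x y ≤ r → dist τ T ≤ r →
      ∃ γ : ℝ → E, γ τ = x ∧ ∀ t ∈ Ioo (τ - ε) (τ + ε), HasDerivAt γ (X (γ t) t) t := by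
  obtain ⟨ε, hε, a, r, L, K, hr, hpl⟩ :=
    IsPicardLindelof.of_contDiffAt_one (hX.prodMk (contDiffAt_const (c := (1 : ℝ))))
  refine ⟨r, hr, ε, hε, fun x τ hx hτ => ?_⟩
  obtain ⟨α, hα₀, hα⟩ := (hpl τ).exists_eq_forall_mem_Icc_hasDerivWithinAt (x := (x, τ))
    (by simpa [Prod.dist_eq] using ⟨hx, hτ⟩)
  have hα' : ∀ t ∈ Ioo (τ - ε) (τ + ε), HasDerivAt α (X (α t).1 (α t).2, 1) t := fun t ht =>
    (hα t (Ioo_subset_Icc_self ht)).hasDerivAt (Icc_mem_nhds ht.1 ht.2)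
  have htime : EqOn (fun t => (α t).2) id (Ioo (τ - ε) (τ + ε)) :=
    eqOn_of_hasDerivAt (X := fun _ _ => (1 : ℝ)) contDiff_const isOpen_Ioo isPreconnected_Ioo
      (fun t ht => by simpa [Function.comp_def] using hasFDerivAt_snd.comp_hasDerivAt t (hα' t ht))
      (fun t _ => hasDerivAt_id t) (t₀ := τ) ⟨by linarith, by linarith⟩ (by simp [hα₀])
  refine ⟨fun t => (α t).1, by simp [hα₀], fun t ht => ?_⟩
  have := hasFDerivAt_fst.comp_hasDerivAt t (hα' t ht)
  rwa [show (α t).2 = t from htime ht] at this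

theorem norm_le_gronwallBound_of_norm_deriv_le_mul_one_add {f f' : ℝ → E} {a b D : ℝ}
    (hab : a ≤ b) (hf : ∀ t ∈ Icc a b, HasDerivAt f (f' t) t)
    (hbound : ∀ t ∈ Icc a b, ‖f' t‖ ≤ D * (1 + ‖f t‖)) :
    ‖f b‖ ≤ gronwallBound ‖f a‖ D D (b - a) :=
  norm_le_gronwallBound_of_norm_deriv_right_le
    (fun t ht => (hf t ht).continuousAt.continuousWithinAt)
    (fun t ht => (hf t (Ico_subset_Icc_self ht)).hasDerivWithinAt) le_rfl
    (fun t ht => by linarith [hbound t (Ico_subset_Icc_self ht), mul_one_add D ‖f t‖]) b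
    (right_mem_Icc.2 hab)

theorem exists_norm_le_of_norm_deriv_le_mul_one_add {f f' : ℝ → E} {a b D : ℝ} (hD : 0 ≤ D)
    (hf : ∀ t ∈ Ioo a b, HasDerivAt f (f' t) t)
    (hbound : ∀ t ∈ Ioo a b, ‖f' t‖ ≤ D * (1 + ‖f t‖)) :
    ∃ M, ∀ t ∈ Ioo a b, ‖f t‖ ≤ M := by
  rcases (Ioo a b).eq_empty_or_nonempty with h | ⟨m, hm⟩
  · exact ⟨0, by simp [h]⟩
  have hmono := gronwallBound_mono (norm_nonneg (f m)) hD hD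
  refine ⟨gronwallBound ‖f m‖ D D (b - a), fun t ht => ?_⟩
  rcases le_total m t with hmt | htm
  · have hsub : Icc m t ⊆ Ioo a b := Icc_subset_Ioo hm.1 ht.2
    calc ‖f t‖ ≤ gronwallBound ‖f m‖ D D (t - m) :=
          norm_le_gronwallBound_of_norm_deriv_le_mul_one_add hmt (fun s hs => hf s (hsub hs))
            (fun s hs => hbound s (hsub hs))
      _ ≤ _ := hmono (by linarith [ht.2, hm.1])
  · -- Grönwall backwards in time, through `s ↦ f (-s)`
    have hsub : ∀ s ∈ Icc (-m) (-t), -s ∈ Ioo a b := fun s hs =>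
      ⟨by linarith [hs.2, ht.1], by linarith [hs.1, hm.2]⟩
    have hback := norm_le_gronwallBound_of_norm_deriv_le_mul_one_add (f := fun s => f (-s))
      (f' := fun s => -f' (-s)) (neg_le_neg htm)
      (fun s hs => by
        simpa [Function.comp_def] using (hf (-s) (hsub s hs)).scomp s (hasDerivAt_neg s))
      (fun s hs => by simpa using hbound (-s) (hsub s hs))
    simp only [neg_neg] at hback
    exact hback.trans (hmono (by linarith [ht.1, hm.2]))

theorem exists_tendsto_nhdsWithin_of_norm_deriv_le_mul_one_add [CompleteSpace E] {f f' : ℝ → E}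
    {a b D T : ℝ} (hD : 0 ≤ D) (hf : ∀ t ∈ Ioo a b, HasDerivAt f (f' t) t)
    (hbound : ∀ t ∈ Ioo a b, ‖f' t‖ ≤ D * (1 + ‖f t‖)) (hT : T ∈ closure (Ioo a b)) :
    ∃ y, Tendsto f (𝓝[Ioo a b] T) (𝓝 y) := by
  obtain ⟨M, hM⟩ := exists_norm_le_of_norm_deriv_le_mul_one_add hD hf hbound
  have hlip : LipschitzOnWith (D * (1 + M)).toNNReal f (Ioo a b) :=
    (convex_Ioo a b).lipschitzOnWith_of_nnnorm_hasDerivWithin_le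
      (fun t ht => (hf t ht).hasDerivWithinAt) fun t ht => by
        rw [← norm_toNNReal]
        exact Real.toNNReal_le_toNNReal ((hbound t ht).trans (by gcongr; exact hM t ht))
  have := mem_closure_iff_nhdsWithin_neBot.1 hT
  exact CompleteSpace.complete <| (cauchy_nhds.mono nhdsWithin_le_nhds).map_of_le
    hlip.uniformContinuousOn (le_principal_iff.2 self_mem_nhdsWithin)

theorem exists_extension_of_tendsto [CompleteSpace E] {X : E → ℝ → E}
    (hX : ContDiff ℝ 1 (fun q : E × ℝ => X q.1 q.2)) {γ : ℝ → E} {A B T : ℝ} {y : E}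
    (hγ : ∀ t ∈ Ioo A B, HasDerivAt γ (X (γ t) t) t) (hT : T ∈ closure (Ioo A B))
    (hy : Tendsto γ (𝓝[Ioo A B] T) (𝓝 y)) :
    ∃ a b, ∃ γ' : ℝ → E, T ∈ Ioo a b ∧ Ioo A B ⊆ Ioo a b ∧ EqOn γ' γ (Ioo A B) ∧
      ∀ t ∈ Ioo a b, HasDerivAt γ' (X (γ' t) t) t := by
  obtain ⟨r, hr, ε, hε, hloc⟩ :=
    exists_forall_dist_le_exists_hasDerivAt (hX.contDiffAt (x := (y, T)))
  have := mem_closure_iff_nhdsWithin_neBot.1 hT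
  have hnear : ∀ᶠ τ in 𝓝[Ioo A B] T, dist τ T < min r (ε / 2) :=
    nhdsWithin_le_nhds (ball_mem_nhds T (by positivity))
  have hclose : ∀ᶠ τ in 𝓝[Ioo A B] T, dist (γ τ) y < r := hy (ball_mem_nhds y hr)
  obtain ⟨τ, hτ, hτT, hγτ⟩ := (eventually_mem_nhdsWithin.and (hnear.and hclose)).exists
  obtain ⟨β, hβτ, hβ⟩ := hloc (γ τ) τ hγτ.le (hτT.le.trans (min_le_left _ _))
  obtain ⟨hτT₁, hτT₂⟩ := abs_lt.1 (hτT.trans_le (min_le_right _ _))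
  have hagree : EqOn γ β (Ioo A B ∩ Ioo (τ - ε) (τ + ε)) :=
    eqOn_of_hasDerivAt hX (isOpen_Ioo.inter isOpen_Ioo)
      (by rw [Ioo_inter_Ioo]; exact isPreconnected_Ioo) (fun t ht => hγ t ht.1)
      (fun t ht => hβ t ht.2) ⟨hτ, by linarith, by linarith⟩ hβτ.symm
  have hγ' : ∀ t ∈ Ioo A B ∪ Ioo (τ - ε) (τ + ε),
      HasDerivAt ((Ioo A B).piecewise γ β) (X ((Ioo A B).piecewise γ β t) t) t := by
    rintro t (ht | ht)
    · exact hasDerivAt_ode_congr isOpen_Ioo (piecewise_eqOn _ _ _) hγ t ht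
    · refine hasDerivAt_ode_congr isOpen_Ioo (fun s hs => ?_) hβ t ht
      by_cases hsAB : s ∈ Ioo A B
      · rw [piecewise_eq_of_mem _ _ _ hsAB, hagree ⟨hsAB, hs⟩]
      · exact piecewise_eq_of_notMem _ _ _ hsAB
  rw [Ioo_union_Ioo' (by linarith [hτ.2]) (by linarith [hτ.1])] at hγ'
  exact ⟨_, _, _, ⟨min_lt_of_right_lt (by linarith), lt_max_of_lt_right (by linarith)⟩,
    Ioo_subset_Ioo (min_le_left _ _) (le_max_left _ _), piecewise_eqOn _ _ _, hγ'⟩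

def maximalInterval (X : E → ℝ → E) (t₀ : ℝ) (x₀ : E) : Set ℝ :=
  {t | ∃ a b, ∃ γ : ℝ → E, t₀ ∈ Ioo a b ∧ t ∈ Ioo a b ∧ γ t₀ = x₀ ∧
    ∀ s ∈ Ioo a b, HasDerivAt γ (X (γ s) s) s}

section maximalInterval

variable {X : E → ℝ → E} {t₀ : ℝ} {x₀ : E}

theorem isOpen_maximalInterval : IsOpen (maximalInterval X t₀ x₀) :=
  isOpen_iff_mem_nhds.2 fun _ ⟨a, b, γ, h₀, ht, hγ₀, hγ⟩ =>
    mem_of_superset (Ioo_mem_nhds ht.1 ht.2) fun _ hs => ⟨a, b, γ, h₀, hs, hγ₀, hγ⟩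

theorem mem_maximalInterval_of_mem_uIcc {t s : ℝ} (ht : t ∈ maximalInterval X t₀ x₀)
    (hs : s ∈ uIcc t₀ t) : s ∈ maximalInterval X t₀ x₀ :=
  let ⟨a, b, γ, h₀, ht, hγ₀, hγ⟩ := ht
  ⟨a, b, γ, h₀, ordConnected_Ioo.uIcc_subset h₀ ht hs, hγ₀, hγ⟩

theorem mem_maximalInterval_self [CompleteSpace E]
    (hX : ContDiffAt ℝ 1 (fun q : E × ℝ => X q.1 q.2) (x₀, t₀)) :
    t₀ ∈ maximalInterval X t₀ x₀ := by
  obtain ⟨r, hr, ε, hε, hloc⟩ := exists_forall_dist_le_exists_hasDerivAt hX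
  obtain ⟨γ, hγ₀, hγ⟩ := hloc x₀ t₀ (by simpa using hr.le) (by simpa using hr.le)
  have h₀ : t₀ ∈ Ioo (t₀ - ε) (t₀ + ε) := ⟨by linarith, by linarith⟩
  exact ⟨_, _, γ, h₀, h₀, hγ₀, hγ⟩

theorem exists_hasDerivAt_maximalInterval (hX : ContDiff ℝ 1 (fun q : E × ℝ => X q.1 q.2))
    (ht₀ : t₀ ∈ maximalInterval X t₀ x₀) :
    ∃ γ : ℝ → E, γ t₀ = x₀ ∧ ∀ t ∈ maximalInterval X t₀ x₀, HasDerivAt γ (X (γ t) t) t := by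
  have H : ∀ t ∈ maximalInterval X t₀ x₀, ∃ a b, ∃ γ : ℝ → E, t₀ ∈ Ioo a b ∧ t ∈ Ioo a b ∧
      γ t₀ = x₀ ∧ ∀ s ∈ Ioo a b, HasDerivAt γ (X (γ s) s) s := fun _ ht => ht
  choose! a b g h₀ hmem hg₀ hg using H
  have hcompat : ∀ s ∈ maximalInterval X t₀ x₀, ∀ t ∈ maximalInterval X t₀ x₀,
      EqOn (g s) (g t) (Ioo (a s) (b s) ∩ Ioo (a t) (b t)) := fun s hs t ht =>
    eqOn_of_hasDerivAt hX (isOpen_Ioo.inter isOpen_Ioo)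
      (by rw [Ioo_inter_Ioo]; exact isPreconnected_Ioo) (fun u hu => hg s hs u hu.1)
      (fun u hu => hg t ht u hu.2) ⟨h₀ s hs, h₀ t ht⟩ ((hg₀ s hs).trans (hg₀ t ht).symm)
  refine ⟨fun t => g t t, hg₀ t₀ ht₀, fun t ht => ?_⟩
  exact hasDerivAt_ode_congr (isOpen_Ioo.inter isOpen_maximalInterval)
    (fun s hs => hcompat s hs.2 t ht ⟨hmem s hs.2, hs.1⟩) (fun s hs => hg t ht s hs.1) t
    ⟨hmem t ht, ht⟩

theorem Ioo_subset_maximalInterval_of_mem_closure {a₀ b₀ t : ℝ} (h₀ : t₀ ∈ Ioo a₀ b₀)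
    (hsub : Ioo a₀ b₀ ⊆ maximalInterval X t₀ x₀) (ht : t ∈ closure (maximalInterval X t₀ x₀)) :
    Ioo (min a₀ t) (max b₀ t) ⊆ maximalInterval X t₀ x₀ := by
  intro s hs
  by_cases hs₀ : s ∈ Ioo a₀ b₀
  · exact hsub hs₀
  -- otherwise `s` is strictly between `t₀` and `t`, and the interval has points beyond `s`
  rw [mem_Ioo, not_and_or, not_lt, not_lt] at hs₀
  rcases hs₀ with hs₀ | hs₀
  · have hts : t < s := (min_lt_iff.1 hs.1).resolve_left hs₀.not_gt
    obtain ⟨v, hvs, hv⟩ := mem_closure_iff_nhds.1 ht _ (Iio_mem_nhds hts)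
    exact mem_maximalInterval_of_mem_uIcc hv
      (mem_uIcc.2 (Or.inr ⟨le_of_lt hvs, by linarith [h₀.1]⟩))
  · have hts : s < t := (lt_max_iff.1 hs.2).resolve_left hs₀.not_gt
    obtain ⟨v, hvs, hv⟩ := mem_closure_iff_nhds.1 ht _ (Ioi_mem_nhds hts)
    exact mem_maximalInterval_of_mem_uIcc hv
      (mem_uIcc.2 (Or.inl ⟨by linarith [h₀.2], le_of_lt hvs⟩))

theorem closure_maximalInterval_subset [CompleteSpace E]
    (hX : ContDiff ℝ 1 (fun q : E × ℝ => X q.1 q.2)) {C₀ C₁ : ℝ → ℝ} (hC₀ : Continuous C₀)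
    (hC₁ : Continuous C₁) (hgrowth : ∀ p t, ‖X p t‖ ≤ C₀ t + C₁ t * ‖p‖) :
    closure (maximalInterval X t₀ x₀) ⊆ maximalInterval X t₀ x₀ := by
  intro t ht
  obtain ⟨u, hu⟩ := closure_nonempty_iff.1 ⟨t, ht⟩
  have ht₀ : t₀ ∈ maximalInterval X t₀ x₀ := mem_maximalInterval_of_mem_uIcc hu left_mem_uIcc
  obtain ⟨γ, hγt₀, hγ⟩ := exists_hasDerivAt_maximalInterval hX ht₀
  obtain ⟨a₀, b₀, γ₀, h₀, -, hγ₀t₀, hγ₀⟩ := ht₀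
  have hAB := Ioo_subset_maximalInterval_of_mem_closure h₀
    (fun s hs => ⟨a₀, b₀, γ₀, h₀, hs, hγ₀t₀, hγ₀⟩) ht
  have ht₀AB : t₀ ∈ Ioo (min a₀ t) (max b₀ t) :=
    ⟨(min_le_left _ _).trans_lt h₀.1, h₀.2.trans_le (le_max_left _ _)⟩
  have hγAB : ∀ s ∈ Ioo (min a₀ t) (max b₀ t), HasDerivAt γ (X (γ s) s) s :=
    fun s hs => hγ s (hAB hs)
  have htAB : t ∈ closure (Ioo (min a₀ t) (max b₀ t)) := by
    rw [closure_Ioo (ht₀AB.1.trans ht₀AB.2).ne]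
    exact ⟨min_le_right _ _, le_max_right _ _⟩
  obtain ⟨D, hD, hbound⟩ := exists_forall_norm_le_mul_one_add hC₀.continuousOn hC₁.continuousOn
    (fun p s _ => hgrowth p s) (a := min a₀ t) (b := max b₀ t)
  obtain ⟨y, hy⟩ := exists_tendsto_nhdsWithin_of_norm_deriv_le_mul_one_add hD hγAB
    (fun s hs => hbound _ s (Ioo_subset_Icc_self hs)) htAB
  obtain ⟨a, b, γ', hta, hsub, heq, hγ'⟩ := exists_extension_of_tendsto hX hγAB htAB hy
  exact ⟨a, b, γ', hsub ht₀AB, hta, (heq ht₀AB).trans hγt₀, hγ'⟩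

theorem maximalInterval_eq_univ [CompleteSpace E]
    (hX : ContDiff ℝ 1 (fun q : E × ℝ => X q.1 q.2)) {C₀ C₁ : ℝ → ℝ} (hC₀ : Continuous C₀)
    (hC₁ : Continuous C₁) (hgrowth : ∀ p t, ‖X p t‖ ≤ C₀ t + C₁ t * ‖p‖) :
    maximalInterval X t₀ x₀ = univ :=
  IsClopen.eq_univ
    ⟨isClosed_of_closure_subset (closure_maximalInterval_subset hX hC₀ hC₁ hgrowth),
      isOpen_maximalInterval⟩
    ⟨t₀, mem_maximalInterval_self hX.contDiffAt⟩

theorem exists_forall_hasDerivAt [CompleteSpace E]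
    (hX : ContDiff ℝ 1 (fun q : E × ℝ => X q.1 q.2)) {C₀ C₁ : ℝ → ℝ} (hC₀ : Continuous C₀)
    (hC₁ : Continuous C₁) (hgrowth : ∀ p t, ‖X p t‖ ≤ C₀ t + C₁ t * ‖p‖) (t₀ : ℝ) (x₀ : E) :
    ∃ γ : ℝ → E, γ t₀ = x₀ ∧ ∀ t, HasDerivAt γ (X (γ t) t) t := by
  have hJ : maximalInterval X t₀ x₀ = univ := maximalInterval_eq_univ hX hC₀ hC₁ hgrowth
  obtain ⟨γ, hγ₀, hγ⟩ := exists_hasDerivAt_maximalInterval hX (hJ ▸ mem_univ t₀)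
  exact ⟨γ, hγ₀, fun t => hγ t (hJ ▸ mem_univ t)⟩

end maximalInterval

end

theorem stmt_6_general {E : Type*} [NormedAddCommGroup E] [NormedSpace ℝ E] [CompleteSpace E]
    (X : E → ℝ → E) (hX : ContDiff ℝ 1 (fun q : E × ℝ => X q.1 q.2))
    (C₀ C₁ : ℝ → ℝ) (hC₀c : Continuous C₀) (hC₁c : Continuous C₁)
    (hgrowth : ∀ (p : E) (t : ℝ), ‖X p t‖ ≤ C₀ t + C₁ t * ‖p‖)
    (a b : ℝ) (c : ℝ → E)
    (hc : ∀ t ∈ Set.Ioo a b, HasDerivAt c (X (c t) t) t) :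
    ∃ c' : ℝ → E, (∀ t ∈ Set.Ioo a b, c' t = c t) ∧ ∀ t : ℝ, HasDerivAt c' (X (c' t) t) t := by
  obtain ⟨γ, hγ₀, hγ⟩ :=
    exists_forall_hasDerivAt hX hC₀c hC₁c hgrowth ((a + b) / 2) (c ((a + b) / 2))
  refine ⟨γ, fun t ht => ?_, hγ⟩
  have ht₀ : (a + b) / 2 ∈ Ioo a b := ⟨by linarith [ht.1, ht.2], by linarith [ht.1, ht.2]⟩
  exact eqOn_of_hasDerivAt hX isOpen_Ioo isPreconnected_Ioo (fun s _ => hγ s) hc ht₀ hγ₀ ht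

/-- A time-dependent `C¹` vector field on a Banach space with at most linear growth along finite
times (time-dependent continuous coefficients) has globally defined solutions. -/
theorem stmt_6 {E : Type*} [NormedAddCommGroup E] [NormedSpace ℝ E] [CompleteSpace E]
    (X : E → ℝ → E) (hX : ContDiff ℝ 1 (fun q : E × ℝ => X q.1 q.2))
    (C₀ C₁ : ℝ → ℝ) (hC₀c : Continuous C₀) (hC₁c : Continuous C₁)
    (hC₀ : ∀ t, 0 < C₀ t) (hC₁ : ∀ t, 0 < C₁ t)
    (hgrowth : ∀ (p : E) (t : ℝ), ‖X p t‖ ≤ C₀ t + C₁ t * ‖p‖)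
    (a b : ℝ) (c : ℝ → E)
    (hc : ∀ t ∈ Set.Ioo a b, HasDerivAt c (X (c t) t) t) :
    ∃ c' : ℝ → E, (∀ t ∈ Set.Ioo a b, c' t = c t) ∧ ∀ t : ℝ, HasDerivAt c' (X (c' t) t) t :=
  stmt_6_general X hX C₀ C₁ hC₀c hC₁c hgrowth a b c hc
end

section
/- Let E be a Banach space, X : E → E a C¹ vector field, and f : E → ℝ a C¹ proper function (preimages of compact intervals are compact) such that |df_p(X(p))| ≤ C₁|f(p)| + C₂ for all p ∈ E and some constants C₁, C₂ > 0. Then every maximal integral curve of X is defined on all of ℝ. -/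
/-!
Along an integral curve `γ` of `X`, the function `u = f ∘ γ` satisfies
`|u'| ≤ C₁ |u| + C₂`, so by Grönwall's inequality `f` stays bounded on bounded time intervals,
i.e. `γ` stays in a compact set `f⁻¹' [-B, B]`. On that set `X` is Lipschitz, which gives
uniqueness. For existence up to time `T`, multiply `X` by a cutoff `φ ∘ f` equal to `1` on the
relevant `f⁻¹' [-B, B]`: the truncated field is compactly supported, hence bounded and globally
Lipschitz, so Picard–Lindelöf solves it on `[-T, T]`; by the same Grönwall estimate this
solution never leaves the region where the cutoff is `1`. Gluing these solutions over growing
intervals gives a global integral curve, and uniqueness identifies it with the given one.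
-/

open Set

theorem norm_le_gronwallBound_of_norm_deriv_le {F : Type*} [NormedAddCommGroup F]
    [NormedSpace ℝ F] {u u' : ℝ → F} {K ε t₀ t : ℝ}
    (hu : ∀ s ∈ uIcc t₀ t, HasDerivAt u (u' s) s)
    (bound : ∀ s ∈ uIcc t₀ t, ‖u' s‖ ≤ K * ‖u s‖ + ε) :
    ‖u t‖ ≤ gronwallBound ‖u t₀‖ K ε |t - t₀| := by
  wlog h : t₀ ≤ t generalizing u u' t₀ t
  · have hmem : ∀ s ∈ uIcc (-t₀) (-t), -s ∈ uIcc t₀ t := fun s hs => by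
      rw [mem_uIcc] at hs ⊢; grind
    have := this (u := fun s => u (-s)) (u' := fun s => -u' (-s))
      (fun s hs => (hu (-s) (hmem s hs)).scomp s (hasDerivAt_neg s) |>.congr_deriv (by simp))
      (fun s hs => by simpa using bound (-s) (hmem s hs)) (by linarith)
    rwa [neg_sub_neg, abs_sub_comm, neg_neg, neg_neg] at this
  have hIcc : Icc t₀ t ⊆ uIcc t₀ t := Icc_subset_uIcc
  rw [abs_of_nonneg (sub_nonneg.2 h)]
  exact norm_le_gronwallBound_of_norm_deriv_right_le
    (fun s hs => (hu s (hIcc hs)).continuousAt.continuousWithinAt)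
    (fun s hs => (hu s (hIcc (Ico_subset_Icc_self hs))).hasDerivWithinAt) le_rfl
    (fun s hs => bound s (hIcc (Ico_subset_Icc_self hs))) t ⟨h, le_rfl⟩

section

variable {E : Type*} [NormedAddCommGroup E] [NormedSpace ℝ E] {X : E → E} {f : E → ℝ}
  {C₁ C₂ : ℝ}

theorem abs_le_gronwallBound_of_hasDerivAt (hf : Differentiable ℝ f)
    (hbound : ∀ p, |fderiv ℝ f p (X p)| ≤ C₁ * |f p| + C₂) {γ : ℝ → E} {t₀ t : ℝ}
    (hγ : ∀ s ∈ uIcc t₀ t, HasDerivAt γ (X (γ s)) s) :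
    |f (γ t)| ≤ gronwallBound |f (γ t₀)| C₁ C₂ |t - t₀| :=
  norm_le_gronwallBound_of_norm_deriv_le
    (fun s hs => (hf (γ s)).hasFDerivAt.comp_hasDerivAt s (hγ s hs)) (fun s _ => hbound (γ s))

theorem mapsTo_preimage_Icc_gronwallBound (hf : Differentiable ℝ f) (hC₁ : 0 ≤ C₁)
    (hC₂ : 0 ≤ C₂) (hbound : ∀ p, |fderiv ℝ f p (X p)| ≤ C₁ * |f p| + C₂) {γ : ℝ → E}
    {a b t₀ : ℝ} (hγ : ∀ t ∈ Ioo a b, HasDerivAt γ (X (γ t)) t) (ht₀ : t₀ ∈ Ioo a b) :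
    MapsTo γ (Ioo a b) (f ⁻¹' Icc (-gronwallBound |f (γ t₀)| C₁ C₂ (b - a))
      (gronwallBound |f (γ t₀)| C₁ C₂ (b - a))) := by
  intro t ht
  have hdist : |t - t₀| ≤ b - a :=
    abs_sub_le_iff.2 ⟨by linarith [ht.2, ht₀.1], by linarith [ht.1, ht₀.2]⟩
  exact abs_le.1 <| (abs_le_gronwallBound_of_hasDerivAt hf hbound
    fun s hs => hγ s (ordConnected_Ioo.uIcc_subset ht₀ ht hs)).trans
      (gronwallBound_mono (abs_nonneg _) hC₂ hC₁ hdist)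

theorem eqOn_Ioo_of_hasDerivAt_of_isCompact_preimage (hX : ContDiff ℝ 1 X)
    (hf : Differentiable ℝ f) (hproper : ∀ a b : ℝ, IsCompact (f ⁻¹' Icc a b))
    (hC₁ : 0 ≤ C₁) (hC₂ : 0 ≤ C₂) (hbound : ∀ p, |fderiv ℝ f p (X p)| ≤ C₁ * |f p| + C₂)
    {γ γ' : ℝ → E} {a b t₀ : ℝ} (hγ : ∀ t ∈ Ioo a b, HasDerivAt γ (X (γ t)) t)
    (hγ' : ∀ t ∈ Ioo a b, HasDerivAt γ' (X (γ' t)) t) (ht₀ : t₀ ∈ Ioo a b)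
    (heq : γ t₀ = γ' t₀) : EqOn γ γ' (Ioo a b) := by
  have hγK := mapsTo_preimage_Icc_gronwallBound hf hC₁ hC₂ hbound hγ ht₀
  have hγ'K := mapsTo_preimage_Icc_gronwallBound hf hC₁ hC₂ hbound hγ' ht₀
  rw [← heq] at hγ'K
  obtain ⟨K, hK⟩ := hX.locallyLipschitz.locallyLipschitzOn.exists_lipschitzOnWith_of_compact
    (hproper _ _)
  exact ODE_solution_unique_of_mem_Ioo (fun _ _ => hK) ht₀
    (fun t ht => ⟨hγ t ht, hγK ht⟩) (fun t ht => ⟨hγ' t ht, hγ'K ht⟩) heq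

theorem exists_contDiff_hasCompactSupport_eqOn_one_preimage_Icc (hf : ContDiff ℝ 1 f)
    (hproper : ∀ a b : ℝ, IsCompact (f ⁻¹' Icc a b)) (B : ℝ) :
    ∃ χ : E → ℝ, ContDiff ℝ 1 χ ∧ HasCompactSupport χ ∧ (∀ p, χ p ∈ Icc 0 1) ∧
      EqOn χ 1 (f ⁻¹' Icc (-B) B) := by
  let φ : ContDiffBump (0 : ℝ) := ⟨|B| + 1, |B| + 2, by positivity, by linarith⟩
  refine ⟨φ ∘ f, φ.contDiff.comp hf, HasCompactSupport.intro (hproper (-(|B| + 2)) (|B| + 2))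
    fun p hp => φ.zero_of_le_dist ?_, fun p => ⟨φ.nonneg, φ.le_one⟩,
    fun p hp => φ.one_of_mem_closedBall ?_⟩
  · rw [mem_preimage, mem_Icc, ← abs_le, not_le] at hp
    simpa [Real.dist_eq] using hp.le
  · rw [mem_preimage, mem_Icc, ← abs_le] at hp
    simpa [Real.dist_eq] using
      hp.trans ((le_abs_self B).trans (le_add_of_nonneg_right zero_le_one))

theorem HasCompactSupport.exists_forall_hasDerivAt_Ioo [CompleteSpace E] {v : E → E}
    (hsupp : HasCompactSupport v) (hv : ContDiff ℝ 1 v) (x₀ : E) {T : ℝ} (hT : 0 ≤ T) :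
    ∃ γ : ℝ → E, γ 0 = x₀ ∧ ∀ t ∈ Ioo (-T) T, HasDerivAt γ (v (γ t)) t := by
  obtain ⟨K, hK⟩ := hv.lipschitzWith_of_hasCompactSupport hsupp one_ne_zero
  obtain ⟨M, hM⟩ := hsupp.exists_bound_of_continuous hv.continuous
  have hpl : IsPicardLindelof (fun _ => v) (tmin := -T) (tmax := T) ⟨0, by simp [hT]⟩ x₀
      (M.toNNReal * T.toNNReal) 0 M.toNNReal K :=
    .of_time_independent (fun x _ => (hM x).trans (Real.le_coe_toNNReal M)) hK.lipschitzOnWith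
      (by simp [Real.coe_toNNReal _ hT])
  obtain ⟨γ, hγ0, hγ⟩ := hpl.exists_eq_forall_mem_Icc_hasDerivWithinAt₀
  exact ⟨γ, hγ0, fun t ht =>
    (hγ t (Ioo_subset_Icc_self ht)).hasDerivAt (Icc_mem_nhds ht.1 ht.2)⟩

theorem exists_forall_hasDerivAt_of_forall_Ioo {v : E → E} {x₀ : E}
    (hunique : ∀ T > 0, ∀ γ γ' : ℝ → E, (∀ t ∈ Ioo (-T) T, HasDerivAt γ (v (γ t)) t) →
      (∀ t ∈ Ioo (-T) T, HasDerivAt γ' (v (γ' t)) t) → γ 0 = γ' 0 → EqOn γ γ' (Ioo (-T) T))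
    (hexists : ∀ T > 0, ∃ γ : ℝ → E, γ 0 = x₀ ∧ ∀ t ∈ Ioo (-T) T, HasDerivAt γ (v (γ t)) t) :
    ∃ γ : ℝ → E, γ 0 = x₀ ∧ ∀ t, HasDerivAt γ (v (γ t)) t := by
  choose! γ hγ0 hγ using hexists
  have hcompat {S T : ℝ} (hS : 0 < S) (hST : S ≤ T) : EqOn (γ S) (γ T) (Ioo (-S) S) :=
    hunique S hS _ _ (hγ S hS)
      (fun t ht => hγ T (hS.trans_le hST) t (Ioo_subset_Ioo (neg_le_neg hST) hST ht))
      (by rw [hγ0 S hS, hγ0 T (hS.trans_le hST)])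
  have hmem (t : ℝ) : t ∈ Ioo (-(|t| + 1)) (|t| + 1) := by
    rw [mem_Ioo, ← abs_lt]; exact lt_add_one _
  refine ⟨fun t => γ (|t| + 1) t, hγ0 _ (by positivity), fun t => ?_⟩
  refine (hγ (|t| + 1) (by positivity) t (hmem t)).congr_of_eventuallyEq ?_
  filter_upwards [Ioo_mem_nhds (hmem t).1 (hmem t).2] with s hs
  rcases le_total (|s| + 1) (|t| + 1) with h | h
  · exact hcompat (by positivity) h (hmem s)
  · exact (hcompat (by positivity) h hs).symm

variable [CompleteSpace E]

theorem exists_forall_hasDerivAt_Ioo_of_isCompact_preimage (hX : ContDiff ℝ 1 X)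
    (hf : ContDiff ℝ 1 f) (hproper : ∀ a b : ℝ, IsCompact (f ⁻¹' Icc a b))
    (hC₁ : 0 ≤ C₁) (hC₂ : 0 ≤ C₂) (hbound : ∀ p, |fderiv ℝ f p (X p)| ≤ C₁ * |f p| + C₂)
    (x₀ : E) {T : ℝ} (hT : 0 < T) :
    ∃ γ : ℝ → E, γ 0 = x₀ ∧ ∀ t ∈ Ioo (-T) T, HasDerivAt γ (X (γ t)) t := by
  obtain ⟨χ, hχ, hχc, hχ01, hχ1⟩ := exists_contDiff_hasCompactSupport_eqOn_one_preimage_Icc hf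
    hproper (gronwallBound |f x₀| C₁ C₂ (T - -T))
  obtain ⟨γ, hγ0, hγ⟩ := hχc.smul_right.exists_forall_hasDerivAt_Ioo (hχ.smul hX) x₀ hT.le
  have hbound' (p : E) : |fderiv ℝ f p ((χ • X) p)| ≤ C₁ * |f p| + C₂ := by
    rw [Pi.smul_apply', map_smul, smul_eq_mul, abs_mul, abs_of_nonneg (hχ01 p).1]
    exact (mul_le_of_le_one_left (abs_nonneg _) (hχ01 p).2).trans (hbound p)
  have hγK := mapsTo_preimage_Icc_gronwallBound (hf.differentiable one_ne_zero) hC₁ hC₂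
    hbound' hγ (t₀ := 0) ⟨neg_lt_zero.2 hT, hT⟩
  rw [hγ0] at hγK
  refine ⟨γ, hγ0, fun t ht => ?_⟩
  simpa only [Pi.smul_apply', hχ1 (hγK ht), Pi.one_apply, one_smul] using hγ t ht

theorem exists_forall_hasDerivAt_of_isCompact_preimage (hX : ContDiff ℝ 1 X)
    (hf : ContDiff ℝ 1 f) (hproper : ∀ a b : ℝ, IsCompact (f ⁻¹' Icc a b))
    (hC₁ : 0 ≤ C₁) (hC₂ : 0 ≤ C₂) (hbound : ∀ p, |fderiv ℝ f p (X p)| ≤ C₁ * |f p| + C₂)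
    (x₀ : E) : ∃ γ : ℝ → E, γ 0 = x₀ ∧ ∀ t, HasDerivAt γ (X (γ t)) t :=
  exists_forall_hasDerivAt_of_forall_Ioo
    (fun _ hT _ _ hγ hγ' heq => eqOn_Ioo_of_hasDerivAt_of_isCompact_preimage hX
      (hf.differentiable one_ne_zero) hproper hC₁ hC₂ hbound hγ hγ' ⟨neg_lt_zero.2 hT, hT⟩ heq)
    (fun _ hT => exists_forall_hasDerivAt_Ioo_of_isCompact_preimage hX hf hproper hC₁ hC₂ hbound
      x₀ hT)

end

/-- Completeness criterion via a proper function: if `f : E → ℝ` is `C¹` and proper and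
`|df_p(X p)| ≤ C₁ |f p| + C₂`, then the `C¹` vector field `X` is complete. -/
theorem stmt_7 {E : Type*} [NormedAddCommGroup E] [NormedSpace ℝ E] [CompleteSpace E]
    (X : E → E) (hX : ContDiff ℝ 1 X)
    (f : E → ℝ) (hf : ContDiff ℝ 1 f)
    (hproper : ∀ a b : ℝ, IsCompact (f ⁻¹' Set.Icc a b))
    (C₁ C₂ : ℝ) (hC₁ : 0 < C₁) (hC₂ : 0 < C₂)
    (hbound : ∀ p : E, |fderiv ℝ f p (X p)| ≤ C₁ * |f p| + C₂)
    (a b : ℝ) (c : ℝ → E)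
    (hc : ∀ t ∈ Set.Ioo a b, HasDerivAt c (X (c t)) t) :
    ∃ c' : ℝ → E, (∀ t ∈ Set.Ioo a b, c' t = c t) ∧ ∀ t : ℝ, HasDerivAt c' (X (c' t)) t := by
  have hglobal := exists_forall_hasDerivAt_of_isCompact_preimage hX hf hproper hC₁.le hC₂.le hbound
  rcases (Ioo a b).eq_empty_or_nonempty with hab | ⟨t₀, ht₀⟩
  · obtain ⟨γ, -, hγ⟩ := hglobal 0
    exact ⟨γ, by simp [hab], hγ⟩
  · obtain ⟨γ, hγ0, hγ⟩ := hglobal (c t₀)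
    have hγ' (t : ℝ) : HasDerivAt (fun s => γ (s - t₀)) (X (γ (t - t₀))) t :=
      (hγ (t - t₀)).comp_sub_const t t₀
    exact ⟨fun t => γ (t - t₀), eqOn_Ioo_of_hasDerivAt_of_isCompact_preimage hX
      (hf.differentiable one_ne_zero) hproper hC₁.le hC₂.le hbound (fun t _ => hγ' t) hc ht₀
      (by simp [hγ0]), hγ'⟩
end

section
/- Let γ : [0,b) → H be a C² curve in a Hilbert space with b < ∞, let u(t) = ‖γ'(t)‖², and suppose there are constants A₀, A₁, A₂ > 0 and a C¹ function t ↦ V(γ(t),t) such that d/dt(u + 2V∘(γ,id))(t) ≤ A₀ + A₁ u(t) + A₂ ‖γ(t) − γ(0)‖² for all t, and −V(γ(t),t) ≤ A₀ + A₂‖γ(t) − γ(0)‖². Then u is bounded on [0,b). -/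
/-!
The modified energy `F = u + 2V + 2A₀ + B‖γ - γ 0‖²` with `B = 2A₂ + 1` dominates
`u + ‖γ - γ 0‖²` by the lower bound on `V`. Since `(‖γ - γ 0‖²)' = 2⟪γ - γ 0, γ'⟫ ≤ ‖γ - γ 0‖² + u`,
the hypothesis on `(u + 2V)'` gives `F' ≤ (A₁ + A₂ + B) F + A₀`, and Grönwall's inequality
bounds `F`, hence `u`, on the finite interval `[0, b)`.
-/

open Set

theorem bddAbove_image_Ico_of_hasDerivAt_le_mul_add {f f' : ℝ → ℝ} {a b K ε : ℝ}
    (hf : ∀ x ∈ Ico a b, HasDerivAt f (f' x) x) (bound : ∀ x ∈ Ico a b, f' x ≤ K * f x + ε) :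
    BddAbove (f '' Ico a b) := by
  set g : ℝ → ℝ := fun x => gronwallBound (f a) K ε (x - a)
  have hg : Continuous g := continuous_iff_continuousAt.2 fun x =>
    (hasDerivAt_gronwallBound_shift (f a) K ε x a).continuousAt
  obtain ⟨C, hC⟩ := (isCompact_Icc (a := a) (b := b)).bddAbove_image hg.continuousOn
  refine ⟨C, forall_mem_image.2 fun t ht => ?_⟩
  have hsub : Icc a t ⊆ Ico a b := Icc_subset_Ico_right ht.2
  have hft : f t ≤ g t := by
    refine le_gronwallBound_of_liminf_deriv_right_le (f' := f') (fun x hx => ?_)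
      (fun x hx r hr => ?_) le_rfl (fun x hx => bound x (hsub (Ico_subset_Icc_self hx)))
      t (right_mem_Icc.2 ht.1)
    · exact (hf x (hsub hx)).continuousAt.continuousWithinAt
    · simpa [slope_def_field, div_eq_inv_mul] using
        (hf x (hsub (Ico_subset_Icc_self hx))).hasDerivWithinAt.liminf_right_slope_le hr
  exact hft.trans (hC (mem_image_of_mem g (Ico_subset_Icc_self ht)))

theorem stmt_11_general {H : Type*} [NormedAddCommGroup H] [InnerProductSpace ℝ H]
    (b : ℝ)
    (γ dγ : ℝ → H)
    (hγ : ∀ t ∈ Set.Ico (0:ℝ) b, HasDerivAt γ (dγ t) t)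
    (W : ℝ → ℝ) -- `W t = V (γ t, t)`
    (A₀ A₁ A₂ : ℝ) (hA₁ : 0 < A₁) (hA₂ : 0 < A₂)
    (hineq : ∀ t ∈ Set.Ico (0:ℝ) b, ∃ D : ℝ,
      HasDerivAt (fun s => ‖dγ s‖ ^ 2 + 2 * W s) D t ∧
      D ≤ A₀ + A₁ * ‖dγ t‖ ^ 2 + A₂ * ‖γ t - γ 0‖ ^ 2)
    (hW : ∀ t ∈ Set.Ico (0:ℝ) b, -W t ≤ A₀ + A₂ * ‖γ t - γ 0‖ ^ 2) :
    ∃ K : ℝ, ∀ t ∈ Set.Ico (0:ℝ) b, ‖dγ t‖ ^ 2 ≤ K := by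
  choose! D hD hDle using hineq
  set B : ℝ := 2 * A₂ + 1
  set F : ℝ → ℝ := fun s => ‖dγ s‖ ^ 2 + 2 * W s + 2 * A₀ + B * ‖γ s - γ 0‖ ^ 2
  have hdom : ∀ t ∈ Ico 0 b, ‖dγ t‖ ^ 2 + ‖γ t - γ 0‖ ^ 2 ≤ F t := fun t ht => by
    linarith [hW t ht]
  have hF : ∀ t ∈ Ico 0 b, HasDerivAt F (D t + B * (2 * inner ℝ (γ t - γ 0) (dγ t))) t :=
    fun t ht => ((hD t ht).add_const _).add (((hγ t ht).sub_const _).norm_sq.const_mul B)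
  have hF' : ∀ t ∈ Ico 0 b,
      D t + B * (2 * inner ℝ (γ t - γ 0) (dγ t)) ≤ (A₁ + A₂ + B) * F t + A₀ := by
    intro t ht
    have hinner : 2 * inner ℝ (γ t - γ 0) (dγ t) ≤ ‖γ t - γ 0‖ ^ 2 + ‖dγ t‖ ^ 2 := by
      linarith [norm_sub_sq_real (γ t - γ 0) (dγ t), sq_nonneg ‖γ t - γ 0 - dγ t‖]
    nlinarith [hDle t ht, hdom t ht, sq_nonneg ‖dγ t‖, sq_nonneg ‖γ t - γ 0‖]
  obtain ⟨K, hK⟩ := bddAbove_image_Ico_of_hasDerivAt_le_mul_add hF hF'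
  refine ⟨K, fun t ht => ?_⟩
  calc ‖dγ t‖ ^ 2 ≤ F t := by linarith [hdom t ht, sq_nonneg ‖γ t - γ 0‖]
    _ ≤ K := hK (mem_image_of_mem F ht)

/-- A priori velocity estimate: if `u = ‖γ'‖²` and `(u + 2V)' ≤ A₀ + A₁ u + A₂ ‖γ - γ(0)‖²`
with `-V ≤ A₀ + A₂ ‖γ - γ(0)‖²` on `[0,b)`, `b < ∞`, then `u` is bounded on `[0,b)`. -/
theorem stmt_11 {H : Type*} [NormedAddCommGroup H] [InnerProductSpace ℝ H] [CompleteSpace H]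
    (b : ℝ) (hb : 0 < b)
    (γ dγ : ℝ → H)
    (hγ : ∀ t ∈ Set.Ico (0:ℝ) b, HasDerivAt γ (dγ t) t)
    (hdγ : ContinuousOn dγ (Set.Ico (0:ℝ) b))
    (W : ℝ → ℝ) -- `W t = V (γ t, t)`
    (A₀ A₁ A₂ : ℝ) (hA₀ : 0 < A₀) (hA₁ : 0 < A₁) (hA₂ : 0 < A₂)
    (hineq : ∀ t ∈ Set.Ico (0:ℝ) b, ∃ D : ℝ,
      HasDerivAt (fun s => ‖dγ s‖ ^ 2 + 2 * W s) D t ∧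
      D ≤ A₀ + A₁ * ‖dγ t‖ ^ 2 + A₂ * ‖γ t - γ 0‖ ^ 2)
    (hW : ∀ t ∈ Set.Ico (0:ℝ) b, -W t ≤ A₀ + A₂ * ‖γ t - γ 0‖ ^ 2) :
    ∃ K : ℝ, ∀ t ∈ Set.Ico (0:ℝ) b, ‖dγ t‖ ^ 2 ≤ K :=
  stmt_11_general b γ dγ hγ W A₀ A₁ A₂ hA₁ hA₂ hineq hW
end
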